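/- arXiv:1011.0043 — 2 statements merged into one kernel-verified Lean document; each statement's English description precedes it below -/
import Mathlib

section
/- Let A, B ∈ M_n(ℂ). If ‖f(A)‖ = ‖f(B)‖ for every polynomial f ∈ ℂ[t], then A and B have the same spectrum: σ(A) = σ(B). -/
/-!
The norm vanishes only at the zero matrix, so `A` and `B` are annihilated by the same
polynomials and hence share their minimal polynomial; the spectrum of a matrix is the
set of roots of its minimal polynomial.
-/

open Polynomial Matrix

/-- The operator norm of a complex matrix, i.e. its norm as a linear map on the
Euclidean space `ℂⁿ`; it equals `√(spr(X*X))`, the largest singular value. -/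
noncomputable def opNorm {n : ℕ} (X : Matrix (Fin n) (Fin n) ℂ) : ℝ :=
  ‖Matrix.toEuclideanCLM (𝕜 := ℂ) X‖

theorem opNorm_eq_zero_iff {n : ℕ} {X : Matrix (Fin n) (Fin n) ℂ} : opNorm X = 0 ↔ X = 0 := by
  rw [opNorm, norm_eq_zero, EmbeddingLike.map_eq_zero_iff]

theorem minpoly_eq_of_aeval_eq_zero_iff {K A B : Type*} [Field K] [Ring A] [Ring B]
    [Algebra K A] [Algebra K B] {a : A} {b : B} (ha : IsIntegral K a) (hb : IsIntegral K b)
    (h : ∀ f : K[X], aeval a f = 0 ↔ aeval b f = 0) : minpoly K a = minpoly K b :=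
  eq_of_monic_of_associated (minpoly.monic ha) (minpoly.monic hb) <| associated_of_dvd_dvd
    (minpoly.dvd K a ((h _).mpr (minpoly.aeval K b)))
    (minpoly.dvd K b ((h _).mp (minpoly.aeval K a)))

theorem Matrix.spectrum_eq_setOf_isRoot_minpoly {K ι : Type*} [Field K] [Fintype ι]
    [DecidableEq ι] (A : Matrix ι ι K) : spectrum K A = {μ | (minpoly K A).IsRoot μ} := by
  let e := Matrix.toLinAlgEquiv (Pi.basisFun K ι)
  ext μ
  rw [← AlgEquiv.spectrum_eq e A, ← Module.End.hasEigenvalue_iff_mem_spectrum,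
    Module.End.hasEigenvalue_iff_isRoot, minpoly.algEquiv_eq e A]
  rfl

theorem Matrix.spectrum_eq_of_aeval_eq_zero_iff {K ι : Type*} [Field K] [Fintype ι]
    [DecidableEq ι] {A B : Matrix ι ι K} (h : ∀ f : K[X], aeval A f = 0 ↔ aeval B f = 0) :
    spectrum K A = spectrum K B := by
  rw [spectrum_eq_setOf_isRoot_minpoly, spectrum_eq_setOf_isRoot_minpoly,
    minpoly_eq_of_aeval_eq_zero_iff (.of_finite K A) (.of_finite K B) h]

/-- If `‖f(A)‖ = ‖f(B)‖` for every polynomial `f`, then `A` and `B` have the same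
spectrum. -/
theorem spectrum_eq_of_polynomial_norms_eq
    (n : ℕ) (A B : Matrix (Fin n) (Fin n) ℂ)
    (h : ∀ f : Polynomial ℂ, opNorm (aeval A f) = opNorm (aeval B f)) :
    spectrum ℂ A = spectrum ℂ B :=
  Matrix.spectrum_eq_of_aeval_eq_zero_iff fun f => by
    rw [← opNorm_eq_zero_iff, ← opNorm_eq_zero_iff, h f]
end

section
/- Let A = [[0, a_{12}, a_{13}], [0, 0, a_{23}], [0, 0, 0]] ∈ M_3(ℂ) with a_{12}, a_{23} > 0 real. Then ‖A‖² = (1/2)(a_{12}² + a_{23}² + |a_{13}|² + √((a_{12}² + a_{23}² + |a_{13}|²)² − 4 a_{12}² a_{23}²)). -/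
/-!
Only `‖p * x₁ + q * x₂‖² + ‖r * x₂‖²` enters `‖A x‖²`, so `‖A‖²` is the smallest `M` with
`‖p x₁ + q x₂‖² + ‖r x₂‖² ≤ M (‖x₁‖² + ‖x₂‖²)`. The triangle inequality, which is sharp once
`x₁` is given the right phase, reduces this to the real form `(a u + b v)² + (d v)² ≤ M (u² + v²)`
with `a = ‖p‖`, `b = ‖q‖`, `d = ‖r‖`, i.e. to `(M - a²) u² - 2ab uv + (M - b² - d²) v² ≥ 0`.
This holds for all `u, v` iff `M ≥ a²`, `M ≥ b² + d²` and `(M - a²)(M - b² - d²) ≥ a²b²`, and the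
least such `M` is the larger root of `M² - (a² + b² + d²) M + a²d² = 0`.
-/

open Matrix

namespace ContinuousLinearMap

variable {𝕜 E F : Type*} [NontriviallyNormedField 𝕜] [SeminormedAddCommGroup E]
  [SeminormedAddCommGroup F] [NormedSpace 𝕜 E] [NormedSpace 𝕜 F]

lemma opNorm_sq_le_of_norm_apply_sq_le (T : E →L[𝕜] F) {M : ℝ} (hM : 0 ≤ M)
    (h : ∀ x, ‖T x‖ ^ 2 ≤ M * ‖x‖ ^ 2) : ‖T‖ ^ 2 ≤ M := by
  have hT : ‖T‖ ≤ √M := T.opNorm_le_bound (Real.sqrt_nonneg M) fun x => by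
    rw [← Real.sqrt_sq (norm_nonneg (T x)), ← Real.sqrt_sq (norm_nonneg x), ← Real.sqrt_mul hM]
    exact Real.sqrt_le_sqrt (h x)
  calc ‖T‖ ^ 2 ≤ √M ^ 2 := pow_le_pow_left₀ (norm_nonneg T) hT 2
    _ = M := Real.sq_sqrt hM

lemma norm_apply_sq_le (T : E →L[𝕜] F) (x : E) : ‖T x‖ ^ 2 ≤ ‖T‖ ^ 2 * ‖x‖ ^ 2 := by
  rw [← mul_pow]
  exact pow_le_pow_left₀ (norm_nonneg _) (T.le_opNorm x) 2

end ContinuousLinearMap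

lemma two_mul_mul_le_of_mul_eq_sq {α β k : ℝ} (hα : 0 ≤ α) (hβ : 0 ≤ β) (h : α * β = k ^ 2)
    (u v : ℝ) : 2 * k * u * v ≤ α * u ^ 2 + β * v ^ 2 := by
  have hk : |k| = √α * √β := by
    rw [← Real.sqrt_mul hα, h, Real.sqrt_sq_eq_abs]
  calc 2 * k * u * v ≤ 2 * (|k| * (|u| * |v|)) := by
        have := le_abs_self (k * (u * v))
        rw [abs_mul, abs_mul] at this
        linarith
    _ = 2 * (√α * |u|) * (√β * |v|) := by rw [hk]; ring
    _ ≤ (√α * |u|) ^ 2 + (√β * |v|) ^ 2 := two_mul_le_add_sq _ _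
    _ = α * u ^ 2 + β * v ^ 2 := by
        rw [mul_pow, mul_pow, Real.sq_sqrt hα, Real.sq_sqrt hβ, sq_abs, sq_abs]

lemma sq_le_mul_of_forall_two_mul_mul_le {α β k : ℝ}
    (h : ∀ u v : ℝ, 2 * k * u * v ≤ α * u ^ 2 + β * v ^ 2) : k ^ 2 ≤ α * β := by
  have hα : 0 ≤ α := by simpa using h 1 0
  have hβ : 0 ≤ β := by simpa using h 0 1
  rcases hα.lt_or_eq with hα | rfl
  · nlinarith [h k α]
  rcases hβ.lt_or_eq with hβ | rfl
  · nlinarith [h β k]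
  nlinarith [h 1 1, h 1 (-1)]

/-- The larger eigenvalue of `Bᵀ B` for `B = !![a, b; 0, d]`. -/
noncomputable def upperTriangularNormSq (a b d : ℝ) : ℝ :=
  (1 / 2 : ℝ) * (a ^ 2 + d ^ 2 + b ^ 2 +
    Real.sqrt ((a ^ 2 + d ^ 2 + b ^ 2) ^ 2 - 4 * a ^ 2 * d ^ 2))

section UpperTriangularNormSq

variable (a b d : ℝ)

lemma upperTriangularNormSq_discr_eq :
    (a ^ 2 + d ^ 2 + b ^ 2) ^ 2 - 4 * a ^ 2 * d ^ 2
      = (b ^ 2 + d ^ 2 - a ^ 2) ^ 2 + 4 * (a * b) ^ 2 := by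
  ring

lemma abs_sub_le_sqrt_upperTriangularNormSq_discr :
    |b ^ 2 + d ^ 2 - a ^ 2| ≤ √((a ^ 2 + d ^ 2 + b ^ 2) ^ 2 - 4 * a ^ 2 * d ^ 2) :=
  Real.abs_le_sqrt (by rw [upperTriangularNormSq_discr_eq]; nlinarith)

lemma sq_le_upperTriangularNormSq : a ^ 2 ≤ upperTriangularNormSq a b d := by
  have := (abs_le.1 (abs_sub_le_sqrt_upperTriangularNormSq_discr a b d)).1
  unfold upperTriangularNormSq
  linarith

lemma sq_add_sq_le_upperTriangularNormSq : b ^ 2 + d ^ 2 ≤ upperTriangularNormSq a b d := by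
  have := (abs_le.1 (abs_sub_le_sqrt_upperTriangularNormSq_discr a b d)).2
  unfold upperTriangularNormSq
  linarith

lemma upperTriangularNormSq_sub_mul_sub :
    (upperTriangularNormSq a b d - a ^ 2) * (upperTriangularNormSq a b d - (b ^ 2 + d ^ 2))
      = (a * b) ^ 2 := by
  have ht := Real.sq_sqrt (show 0 ≤ (a ^ 2 + d ^ 2 + b ^ 2) ^ 2 - 4 * a ^ 2 * d ^ 2 by
    rw [upperTriangularNormSq_discr_eq]; positivity)
  unfold upperTriangularNormSq
  linear_combination (1 / 4 : ℝ) * ht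

lemma sq_add_sq_le_upperTriangularNormSq_mul (u v : ℝ) :
    (a * u + b * v) ^ 2 + (d * v) ^ 2 ≤ upperTriangularNormSq a b d * (u ^ 2 + v ^ 2) := by
  have := two_mul_mul_le_of_mul_eq_sq (sub_nonneg.2 (sq_le_upperTriangularNormSq a b d))
    (sub_nonneg.2 (sq_add_sq_le_upperTriangularNormSq a b d))
    (upperTriangularNormSq_sub_mul_sub a b d) u v
  linear_combination this

lemma upperTriangularNormSq_le {M : ℝ}
    (h : ∀ u v : ℝ, (a * u + b * v) ^ 2 + (d * v) ^ 2 ≤ M * (u ^ 2 + v ^ 2)) :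
    upperTriangularNormSq a b d ≤ M := by
  have ha : a ^ 2 ≤ M := by simpa using h 1 0
  have hbd : b ^ 2 + d ^ 2 ≤ M := by simpa using h 0 1
  have hk := sq_le_mul_of_forall_two_mul_mul_le (k := a * b) (α := M - a ^ 2)
    (β := M - (b ^ 2 + d ^ 2)) fun u v => by linear_combination h u v
  have hsqrt : √((a ^ 2 + d ^ 2 + b ^ 2) ^ 2 - 4 * a ^ 2 * d ^ 2)
      ≤ 2 * M - (a ^ 2 + d ^ 2 + b ^ 2) :=
    (Real.sqrt_le_left (by linarith)).2 (by linear_combination 4 * hk)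
  unfold upperTriangularNormSq
  linarith

end UpperTriangularNormSq

lemma norm_mul_add_mul_sq_add_le (p q r z w : ℂ) :
    ‖p * z + q * w‖ ^ 2 + ‖r * w‖ ^ 2
      ≤ upperTriangularNormSq ‖p‖ ‖q‖ ‖r‖ * (‖z‖ ^ 2 + ‖w‖ ^ 2) := by
  have htri : ‖p * z + q * w‖ ≤ ‖p‖ * ‖z‖ + ‖q‖ * ‖w‖ := by
    rw [← norm_mul, ← norm_mul]
    exact norm_add_le _ _
  calc ‖p * z + q * w‖ ^ 2 + ‖r * w‖ ^ 2
      ≤ (‖p‖ * ‖z‖ + ‖q‖ * ‖w‖) ^ 2 + (‖r‖ * ‖w‖) ^ 2 := by rw [norm_mul r]; gcongr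
    _ ≤ _ := sq_add_sq_le_upperTriangularNormSq_mul _ _ _ _ _

open Complex in
lemma exists_norm_eq_abs_and_norm_mul_add_mul_eq (p q : ℂ) (u v : ℝ) :
    ∃ z : ℂ, ‖z‖ = |u| ∧ ‖p * z + q * v‖ = |‖p‖ * u + ‖q‖ * v| := by
  refine ⟨u * exp (q.arg * I) * exp (-p.arg * I), ?_, ?_⟩
  · simp [norm_exp_ofReal_mul_I, ← ofReal_neg]
  have hp := norm_mul_exp_arg_mul_I p
  have hq := norm_mul_exp_arg_mul_I q
  have hcancel : exp (p.arg * I) * exp (-p.arg * I) = 1 := by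
    rw [← exp_add]
    simp
  have haligned : p * (u * exp (q.arg * I) * exp (-p.arg * I)) + q * v
      = ((‖p‖ * u + ‖q‖ * v : ℝ) : ℂ) * exp (q.arg * I) := by
    push_cast
    linear_combination -(u * exp (q.arg * I) * exp (-p.arg * I)) * hp
      + (‖p‖ * u * exp (q.arg * I) : ℂ) * hcancel - (v : ℂ) * hq
  rw [haligned, norm_mul, norm_exp_ofReal_mul_I, norm_real, Real.norm_eq_abs, mul_one]

lemma EuclideanSpace.norm_sq_fin_three (x : EuclideanSpace ℂ (Fin 3)) :
    ‖x‖ ^ 2 = ‖x 0‖ ^ 2 + ‖x 1‖ ^ 2 + ‖x 2‖ ^ 2 := by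
  rw [EuclideanSpace.norm_sq_eq, Fin.sum_univ_three]

lemma norm_toEuclideanCLM_strictUpper_apply_sq (p q r : ℂ) (x : EuclideanSpace ℂ (Fin 3)) :
    ‖toEuclideanCLM (𝕜 := ℂ) !![0, p, q; 0, 0, r; 0, 0, 0] x‖ ^ 2
      = ‖p * x 1 + q * x 2‖ ^ 2 + ‖r * x 2‖ ^ 2 := by
  rw [EuclideanSpace.norm_sq_fin_three]
  simp [mulVec, dotProduct, Fin.sum_univ_three]

theorem opNorm_sq_strictUpper_fin_three (p q r : ℂ) :
    opNorm !![0, p, q; 0, 0, r; 0, 0, 0] ^ 2 = upperTriangularNormSq ‖p‖ ‖q‖ ‖r‖ := by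
  unfold opNorm
  set T := toEuclideanCLM (𝕜 := ℂ) !![0, p, q; 0, 0, r; 0, 0, 0]
  have hM : 0 ≤ upperTriangularNormSq ‖p‖ ‖q‖ ‖r‖ :=
    (sq_nonneg _).trans (sq_le_upperTriangularNormSq _ _ _)
  apply le_antisymm
  · refine T.opNorm_sq_le_of_norm_apply_sq_le hM fun x => ?_
    rw [norm_toEuclideanCLM_strictUpper_apply_sq, EuclideanSpace.norm_sq_fin_three]
    nlinarith [norm_mul_add_mul_sq_add_le p q r (x 1) (x 2), mul_nonneg hM (sq_nonneg ‖x 0‖)]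
  · refine upperTriangularNormSq_le _ _ _ fun u v => ?_
    obtain ⟨z, hz, hpq⟩ := exists_norm_eq_abs_and_norm_mul_add_mul_eq p q u v
    have hx := T.norm_apply_sq_le !₂[0, z, v]
    rw [norm_toEuclideanCLM_strictUpper_apply_sq, EuclideanSpace.norm_sq_fin_three] at hx
    simpa [hz, hpq, norm_mul, mul_pow] using hx

theorem opNorm_sq_three_by_three_general
    (a12 a23 : ℝ) (a13 : ℂ)
    (A : Matrix (Fin 3) (Fin 3) ℂ)
    (hA : A = !![0, (a12 : ℂ), a13; 0, 0, (a23 : ℂ); 0, 0, 0]) :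
    opNorm A ^ 2 =
      (1 / 2 : ℝ) * (a12 ^ 2 + a23 ^ 2 + ‖a13‖ ^ 2 +
        Real.sqrt ((a12 ^ 2 + a23 ^ 2 + ‖a13‖ ^ 2) ^ 2 -
          4 * a12 ^ 2 * a23 ^ 2)) := by
  rw [hA, opNorm_sq_strictUpper_fin_three, upperTriangularNormSq]
  simp only [Complex.norm_real, Real.norm_eq_abs, sq_abs]

/-- For `A = [[0, a₁₂, a₁₃], [0, 0, a₂₃], [0, 0, 0]]` with `a₁₂, a₂₃ > 0` real,
`‖A‖² = (1/2)(a₁₂² + a₂₃² + |a₁₃|² + √((a₁₂² + a₂₃² + |a₁₃|²)² - 4 a₁₂² a₂₃²))`. -/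
theorem opNorm_sq_three_by_three
    (a12 a23 : ℝ) (h12 : 0 < a12) (h23 : 0 < a23) (a13 : ℂ)
    (A : Matrix (Fin 3) (Fin 3) ℂ)
    (hA : A = !![0, (a12 : ℂ), a13; 0, 0, (a23 : ℂ); 0, 0, 0]) :
    opNorm A ^ 2 =
      (1 / 2 : ℝ) * (a12 ^ 2 + a23 ^ 2 + ‖a13‖ ^ 2 +
        Real.sqrt ((a12 ^ 2 + a23 ^ 2 + ‖a13‖ ^ 2) ^ 2 -
          4 * a12 ^ 2 * a23 ^ 2)) :=
  opNorm_sq_three_by_three_general a12 a23 a13 A hA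
end
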